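/- arXiv:1808.01484 — 3 statements merged into one kernel-verified Lean document; each statement's English description precedes it below -/
import Mathlib

section
/- For 1 < α < 2, the improper integral ∫₀^∞ (1 − cos u)/u^α du equals −Γ(1−α)·sin(πα/2), and the improper integral ∫₀^∞ (sin u)/u^α du equals Γ(1−α)·cos(πα/2). -/
/-!
Write `u ^ (-α) = Γ(α)⁻¹ ∫₀^∞ t ^ (α - 1) e^(-t u) dt` and swap the integrals; Fubini
applies because both numerators are `O(min(u, 1))`, so the integrands are absolutely
integrable when `1 < α < 2`.
The Laplace transforms `1 / (1 + t²)` of `sin u` and `1 / (t (1 + t²))` of `1 - cos u` are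
read off from `∫₀^∞ e^((-t + i) u) du = 1 / (t - i)`. This reduces both
integrals to `∫₀^∞ t ^ (s - 1) / (1 + t²) dt = π / (2 sin (π s / 2))` at `s = α` and
`s = α - 1`, which follows from the same device applied to
`1 / (1 + t²) = ∫₀^∞ e^(-v (1 + t²)) dv` and Euler's reflection formula.
-/

open Filter Topology

open MeasureTheory Set Real

section LaplaceTransform

variable {t : ℝ}

lemma integrableOn_cexp_neg_mul_add_I_mul (ht : 0 < t) :
    IntegrableOn (fun u : ℝ => Complex.exp ((-t + Complex.I) * u)) (Ioi 0) :=
  integrableOn_exp_mul_complex_Ioi (by simpa using ht) 0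

lemma integral_cexp_neg_mul_add_I_mul (ht : 0 < t) :
    ∫ u in Ioi (0:ℝ), Complex.exp ((-t + Complex.I) * u) =
      (t + Complex.I) / ((1 + t ^ 2 : ℝ) : ℂ) := by
  have h1 : (-t + Complex.I) ≠ 0 := by
    intro h; simpa [ht.ne'] using congrArg Complex.re h
  have h2 : (1 + (t:ℂ) ^ 2) ≠ 0 := by exact_mod_cast (by positivity : (1 + t ^ 2) ≠ 0)
  rw [integral_exp_mul_complex_Ioi (by simpa using ht) 0]
  push_cast
  field_simp
  ring_nf
  simp [Complex.I_sq]
  ring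

lemma integral_exp_neg_mul_mul_sin (ht : 0 < t) :
    ∫ u in Ioi (0:ℝ), exp (-(t * u)) * sin u = 1 / (1 + t ^ 2) := by
  have h := congrArg Complex.im (integral_cexp_neg_mul_add_I_mul ht)
  have hcomm := integral_im (integrableOn_cexp_neg_mul_add_I_mul ht)
  simp only [RCLike.im_to_complex] at hcomm
  rw [← hcomm] at h
  convert h using 1
  · simp [Complex.exp_im]
  · rw [Complex.div_ofReal_im]; simp

lemma integral_exp_neg_mul_mul_cos (ht : 0 < t) :
    ∫ u in Ioi (0:ℝ), exp (-(t * u)) * cos u = t / (1 + t ^ 2) := by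
  have h := congrArg Complex.re (integral_cexp_neg_mul_add_I_mul ht)
  have hcomm := integral_re (integrableOn_cexp_neg_mul_add_I_mul ht)
  simp only [RCLike.re_to_complex] at hcomm
  rw [← hcomm] at h
  convert h using 1
  · simp [Complex.exp_re]
  · rw [Complex.div_ofReal_re]; simp

lemma integral_exp_neg_mul_mul_one_sub_cos (ht : 0 < t) :
    ∫ u in Ioi (0:ℝ), exp (-(t * u)) * (1 - cos u) = 1 / (t * (1 + t ^ 2)) := by
  have hexp : IntegrableOn (fun u : ℝ => exp (-(t * u))) (Ioi 0) := by
    simpa using integrableOn_exp_mul_Ioi (neg_lt_zero.2 ht) 0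
  have hexp_cos : IntegrableOn (fun u : ℝ => exp (-(t * u)) * cos u) (Ioi 0) :=
    Integrable.of_integral_ne_zero (by rw [integral_exp_neg_mul_mul_cos ht]; positivity)
  have hexp_int : ∫ u in Ioi (0:ℝ), exp (-(t * u)) = 1 / t := by
    simpa [neg_div] using integral_exp_mul_Ioi (neg_lt_zero.2 ht) 0
  simp_rw [mul_one_sub]
  rw [integral_sub hexp hexp_cos, hexp_int, integral_exp_neg_mul_mul_cos ht]
  field_simp
  ring

end LaplaceTransform

lemma abs_sin_le_min {u : ℝ} (hu : 0 ≤ u) : |sin u| ≤ min u 1 :=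
  le_min (abs_sin_le_abs.trans_eq (abs_of_nonneg hu)) (abs_sin_le_one u)

lemma abs_one_sub_cos_le_two_mul_min {u : ℝ} (hu : 0 ≤ u) : |1 - cos u| ≤ 2 * min u 1 := by
  rw [abs_of_nonneg (sub_nonneg.2 (cos_le_one u))]
  rcases le_total u 1 with h | h
  · rw [min_eq_left h]
    nlinarith [one_sub_sq_div_two_le_cos (x := u)]
  · rw [min_eq_right h]
    linarith [neg_one_le_cos u]

lemma integrableOn_min_one_div_rpow {α : ℝ} (hα1 : 1 < α) (hα2 : α < 2) :
    IntegrableOn (fun u : ℝ => min u 1 / u ^ α) (Ioi 0) := by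
  rw [← Ioc_union_Ioi_eq_Ioi zero_le_one]
  refine IntegrableOn.union ?_ ?_
  · refine ((intervalIntegral.integrableOn_Ioo_rpow_iff zero_lt_one).2
      (by linarith : (-1:ℝ) < 1 - α)).congr_set_ae Ioo_ae_eq_Ioc.symm |>.congr_fun
        (fun u hu => ?_) measurableSet_Ioc
    dsimp only
    rw [min_eq_left hu.2, rpow_sub hu.1, rpow_one]
  · refine (integrableOn_Ioi_rpow_of_lt (by linarith : -α < -1) zero_lt_one).congr_fun
      (fun u hu => ?_) measurableSet_Ioi
    dsimp only
    rw [min_eq_right (le_of_lt hu), rpow_neg (by linarith [mem_Ioi.1 hu]), one_div]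

lemma integrableOn_div_rpow_of_abs_le {α C : ℝ} (hα1 : 1 < α) (hα2 : α < 2) {h : ℝ → ℝ}
    (hm : Measurable h) (hb : ∀ u, 0 ≤ u → |h u| ≤ C * min u 1) :
    IntegrableOn (fun u => h u / u ^ α) (Ioi 0) := by
  refine ((integrableOn_min_one_div_rpow hα1 hα2).const_mul C).mono'
    (by fun_prop : Measurable fun u => h u / u ^ α).aestronglyMeasurable ?_
  filter_upwards [ae_restrict_mem measurableSet_Ioi] with u hu
  rw [norm_div, norm_of_nonneg (rpow_nonneg (le_of_lt hu) _), mul_div_assoc']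
  exact div_le_div_of_nonneg_right (hb u (le_of_lt hu)) (rpow_nonneg (le_of_lt hu) _)

lemma integral_rpow_mul_exp_neg_mul_Ioi_eq_div {a r : ℝ} (ha : 0 < a) (hr : 0 < r) :
    ∫ t in Ioi (0:ℝ), t ^ (a - 1) * exp (-(r * t)) = Gamma a / r ^ a := by
  rw [integral_rpow_mul_exp_neg_mul_Ioi ha hr, one_div, inv_rpow hr.le, inv_mul_eq_div]

lemma integral_rpow_mul_exp_neg_mul_sq_Ioi {s v : ℝ} (hs : 0 < s) (hv : 0 < v) :
    ∫ t in Ioi (0:ℝ), t ^ (s - 1) * exp (-v * t ^ 2) = Gamma (s / 2) / (2 * v ^ (s / 2)) := by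
  have h := integral_rpow_mul_exp_neg_mul_rpow two_pos (by linarith : -1 < s - 1) hv
  simp only [rpow_two, sub_add_cancel, neg_div, rpow_neg hv.le] at h
  rw [h]
  field_simp

lemma integral_rpow_div_one_add_sq {s : ℝ} (hs0 : 0 < s) (hs2 : s < 2) :
    ∫ t in Ioi (0:ℝ), t ^ (s - 1) / (1 + t ^ 2) = π / (2 * sin (π * s / 2)) := by
  set F : ℝ → ℝ → ℝ := fun t v => exp (-v) * (t ^ (s - 1) * exp (-v * t ^ 2))
  have hF_inner : ∀ v ∈ Ioi (0:ℝ),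
      ∫ t in Ioi (0:ℝ), F t v = v ^ (1 - s / 2 - 1) * exp (-(1 * v)) * (Gamma (s / 2) / 2) := by
    intro v hv
    rw [integral_const_mul, integral_rpow_mul_exp_neg_mul_sq_Ioi hs0 hv, sub_sub_cancel_left,
      rpow_neg (le_of_lt hv), one_mul]
    field_simp
  have hF : Integrable (Function.uncurry F)
      ((volume.restrict (Ioi 0)).prod (volume.restrict (Ioi 0))) := by
    have hmeas : Measurable (Function.uncurry F) := by
      change Measurable fun p : ℝ × ℝ => exp (-p.2) * (p.1 ^ (s - 1) * exp (-p.2 * p.1 ^ 2))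
      fun_prop
    refine (integrable_prod_iff' hmeas.aestronglyMeasurable).2 ⟨?_, ?_⟩
    · filter_upwards [ae_restrict_mem measurableSet_Ioi] with v hv
      exact (integrableOn_rpow_mul_exp_neg_mul_sq (s := s - 1) hv (by linarith)).const_mul
        (exp (-v))
    · have hgamma :
          IntegrableOn (fun v : ℝ => v ^ (1 - s / 2 - 1) * exp (-(1 * v))) (Ioi 0) := by
        refine Integrable.of_integral_ne_zero ?_
        rw [integral_rpow_mul_exp_neg_mul_Ioi_eq_div (by linarith) one_pos]
        exact (div_pos (Gamma_pos_of_pos (by linarith)) (by positivity)).ne'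
      refine (hgamma.mul_const (Gamma (s / 2) / 2)).congr ?_
      filter_upwards [ae_restrict_mem measurableSet_Ioi] with v hv
      rw [← hF_inner v hv]
      refine setIntegral_congr_fun measurableSet_Ioi fun t ht => ?_
      have ht0 : (0:ℝ) < t := ht
      exact (norm_of_nonneg (by positivity)).symm
  calc ∫ t in Ioi (0:ℝ), t ^ (s - 1) / (1 + t ^ 2)
      = ∫ t in Ioi (0:ℝ), ∫ v in Ioi (0:ℝ), F t v := by
        refine setIntegral_congr_fun measurableSet_Ioi fun t _ => ?_
        have h1t : 0 < 1 + t ^ 2 := by positivity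
        calc t ^ (s - 1) / (1 + t ^ 2)
            = t ^ (s - 1) * ∫ v in Ioi (0:ℝ), exp (-(1 + t ^ 2) * v) := by
              rw [integral_exp_mul_Ioi (by linarith) 0]
              field_simp
              simp
          _ = ∫ v in Ioi (0:ℝ), F t v := by
              rw [← integral_const_mul]
              congr 1 with v
              simp only [F]
              rw [mul_left_comm, ← exp_add]
              ring_nf
    _ = ∫ v in Ioi (0:ℝ), ∫ t in Ioi (0:ℝ), F t v := integral_integral_swap hF
    _ = Gamma (1 - s / 2) * (Gamma (s / 2) / 2) := by
        rw [setIntegral_congr_fun measurableSet_Ioi hF_inner, integral_mul_const,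
          integral_rpow_mul_exp_neg_mul_Ioi_eq_div (by linarith) one_pos, one_rpow, div_one]
    _ = π / (2 * sin (π * s / 2)) := by
        rw [mul_div_assoc', mul_comm, Gamma_mul_Gamma_one_sub, mul_div_assoc, div_div, mul_comm]

theorem Gamma_mul_integral_div_rpow {α : ℝ} (hα : 0 < α) {h : ℝ → ℝ} (hm : Measurable h)
    (hint : IntegrableOn (fun u => h u / u ^ α) (Ioi 0)) :
    Gamma α * ∫ u in Ioi (0:ℝ), h u / u ^ α =
      ∫ t in Ioi (0:ℝ), t ^ (α - 1) * ∫ u in Ioi (0:ℝ), exp (-(t * u)) * h u := by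
  set G : ℝ → ℝ → ℝ := fun u t => h u * (t ^ (α - 1) * exp (-(u * t)))
  have hG_inner :
      ∀ u ∈ Ioi (0:ℝ), ∫ t in Ioi (0:ℝ), G u t = Gamma α * (h u / u ^ α) := by
    intro u hu
    rw [integral_const_mul, integral_rpow_mul_exp_neg_mul_Ioi_eq_div hα hu]
    ring
  have hG : Integrable (Function.uncurry G)
      ((volume.restrict (Ioi 0)).prod (volume.restrict (Ioi 0))) := by
    have hmeas : Measurable (Function.uncurry G) := by
      change Measurable fun p : ℝ × ℝ => h p.1 * (p.2 ^ (α - 1) * exp (-(p.1 * p.2)))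
      fun_prop
    refine (integrable_prod_iff hmeas.aestronglyMeasurable).2 ⟨?_, ?_⟩
    · filter_upwards [ae_restrict_mem measurableSet_Ioi] with u hu
      refine Integrable.const_mul
        (Integrable.of_integral_ne_zero (f := fun t => t ^ (α - 1) * exp (-(u * t))) ?_) (h u)
      rw [integral_rpow_mul_exp_neg_mul_Ioi_eq_div hα hu]
      exact (div_pos (Gamma_pos_of_pos hα) (rpow_pos_of_pos hu _)).ne'
    · refine (hint.norm.const_mul (Gamma α)).congr ?_
      filter_upwards [ae_restrict_mem measurableSet_Ioi] with u hu
      have hu0 : (0:ℝ) < u := hu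
      change Gamma α * ‖h u / u ^ α‖ = ∫ t in Ioi (0:ℝ), ‖G u t‖
      rw [norm_div, norm_of_nonneg (rpow_pos_of_pos hu0 α).le]
      calc Gamma α * (‖h u‖ / u ^ α)
          = ‖h u‖ * ∫ t in Ioi (0:ℝ), t ^ (α - 1) * exp (-(u * t)) := by
            rw [integral_rpow_mul_exp_neg_mul_Ioi_eq_div hα hu0]; ring
        _ = ∫ t in Ioi (0:ℝ), ‖G u t‖ := by
            rw [← integral_const_mul]
            refine setIntegral_congr_fun measurableSet_Ioi fun t ht => ?_
            have ht0 : (0:ℝ) < t := ht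
            rw [norm_mul, norm_of_nonneg (by positivity : 0 ≤ t ^ (α - 1) * exp (-(u * t)))]
  calc Gamma α * ∫ u in Ioi (0:ℝ), h u / u ^ α
      = ∫ u in Ioi (0:ℝ), ∫ t in Ioi (0:ℝ), G u t := by
        rw [← integral_const_mul]
        exact setIntegral_congr_fun measurableSet_Ioi fun u hu => (hG_inner u hu).symm
    _ = ∫ t in Ioi (0:ℝ), ∫ u in Ioi (0:ℝ), G u t := integral_integral_swap hG
    _ = _ := by
        refine setIntegral_congr_fun measurableSet_Ioi fun t _ => ?_
        rw [← integral_const_mul]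
        congr 1 with u
        simp only [G]
        ring_nf

lemma Gamma_mul_Gamma_one_sub_eq_div_sin_mul_cos (s : ℝ) :
    Gamma s * Gamma (1 - s) = π / (2 * sin (π * s / 2) * cos (π * s / 2)) := by
  rw [Gamma_mul_Gamma_one_sub, ← sin_two_mul]
  ring_nf

section

variable {α : ℝ} (hα1 : 1 < α) (hα2 : α < 2)
include hα1 hα2

lemma sin_pi_mul_div_two_pos : 0 < sin (π * α / 2) :=
  sin_pos_of_pos_of_lt_pi (by nlinarith [pi_pos]) (by nlinarith [pi_pos])

lemma cos_pi_mul_div_two_neg : cos (π * α / 2) < 0 :=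
  cos_neg_of_pi_div_two_lt_of_lt (by nlinarith [pi_pos]) (by nlinarith [pi_pos])

lemma integrableOn_sin_div_rpow : IntegrableOn (fun u => sin u / u ^ α) (Ioi 0) :=
  integrableOn_div_rpow_of_abs_le hα1 hα2 measurable_sin
    fun _ hu => (abs_sin_le_min hu).trans_eq (one_mul _).symm

lemma integrableOn_one_sub_cos_div_rpow :
    IntegrableOn (fun u => (1 - cos u) / u ^ α) (Ioi 0) :=
  integrableOn_div_rpow_of_abs_le hα1 hα2 (by fun_prop) fun _ => abs_one_sub_cos_le_two_mul_min

theorem integral_sin_div_rpow :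
    ∫ u in Ioi (0:ℝ), sin u / u ^ α = Gamma (1 - α) * cos (π * α / 2) := by
  have hα0 : 0 < α := by linarith
  have key := Gamma_mul_integral_div_rpow hα0 measurable_sin (integrableOn_sin_div_rpow hα1 hα2)
  have hmellin : ∫ t in Ioi (0:ℝ), t ^ (α - 1) * ∫ u in Ioi (0:ℝ), exp (-(t * u)) * sin u =
      π / (2 * sin (π * α / 2)) := by
    rw [← integral_rpow_div_one_add_sq hα0 hα2]
    refine setIntegral_congr_fun measurableSet_Ioi fun t ht => ?_
    rw [integral_exp_neg_mul_mul_sin ht, mul_one_div]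
  refine mul_left_cancel₀ (Gamma_pos_of_pos hα0).ne' ((key.trans hmellin).trans ?_)
  rw [← mul_assoc, Gamma_mul_Gamma_one_sub_eq_div_sin_mul_cos]
  field_simp [(cos_pi_mul_div_two_neg hα1 hα2).ne]

theorem integral_one_sub_cos_div_rpow :
    ∫ u in Ioi (0:ℝ), (1 - cos u) / u ^ α = -(Gamma (1 - α) * sin (π * α / 2)) := by
  have hα0 : 0 < α := by linarith
  have key := Gamma_mul_integral_div_rpow hα0 (by fun_prop)
    (integrableOn_one_sub_cos_div_rpow hα1 hα2)
  have hmellin :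
      ∫ t in Ioi (0:ℝ), t ^ (α - 1) * ∫ u in Ioi (0:ℝ), exp (-(t * u)) * (1 - cos u) =
        π / (2 * sin (π * (α - 1) / 2)) := by
    rw [← integral_rpow_div_one_add_sq (by linarith) (by linarith)]
    refine setIntegral_congr_fun measurableSet_Ioi fun t ht => ?_
    rw [integral_exp_neg_mul_mul_one_sub_cos ht, rpow_sub_one (ne_of_gt ht) (α - 1)]
    field_simp
  refine mul_left_cancel₀ (Gamma_pos_of_pos hα0).ne' ((key.trans hmellin).trans ?_)
  rw [mul_neg, ← mul_assoc, Gamma_mul_Gamma_one_sub_eq_div_sin_mul_cos,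
    show π * (α - 1) / 2 = π * α / 2 - π / 2 by ring, sin_sub_pi_div_two]
  field_simp [(sin_pi_mul_div_two_pos hα1 hα2).ne']

end

/-- For `1 < α < 2`: `∫₀^∞ (1 − cos u)/u^α du = −Γ(1−α) sin(πα/2)` and
`∫₀^∞ (sin u)/u^α du = Γ(1−α) cos(πα/2)`, as improper Riemann integrals. -/
theorem stmt1 (α : ℝ) (hα : 1 < α) (hα2 : α < 2) :
    Tendsto (fun T : ℝ => ∫ u in (0:ℝ)..T, (1 - Real.cos u) / u ^ α) atTop
      (𝓝 (-(Real.Gamma (1 - α) * Real.sin (Real.pi * α / 2)))) ∧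
    Tendsto (fun T : ℝ => ∫ u in (0:ℝ)..T, Real.sin u / u ^ α) atTop
      (𝓝 (Real.Gamma (1 - α) * Real.cos (Real.pi * α / 2))) := by
  rw [← integral_one_sub_cos_div_rpow hα hα2, ← integral_sin_div_rpow hα hα2]
  exact ⟨intervalIntegral_tendsto_integral_Ioi 0 (integrableOn_one_sub_cos_div_rpow hα hα2)
      tendsto_id,
    intervalIntegral_tendsto_integral_Ioi 0 (integrableOn_sin_div_rpow hα hα2) tendsto_id⟩
end

section
/- Let S be a recurrent, strongly aperiodic random walk on ℤ with step distribution p and n-step probabilities p^n(x). Then the potential kernel a(x) = Σ_{n≥0} [p^n(0) − p^n(−x)] satisfies the subadditivity inequality a(x+y) ≤ a(x) + a(y) for all x, y ∈ ℤ. -/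
open Filter Topology

noncomputable def pn (p : ℤ → ℝ) : ℕ → ℤ → ℝ
  | 0, x => if x = 0 then 1 else 0
  | n + 1, x => ∑' y : ℤ, pn p n y * p (x - y)

/-- transition function of the walk killed upon hitting `0` (at times `≥ 1`). -/
noncomputable def qk (p : ℤ → ℝ) : ℕ → ℤ → ℤ → ℝ
  | 0, x, v => if v = x then 1 else 0
  | n + 1, x, v => if v = 0 then 0 else ∑' z : ℤ, qk p n x z * p (v - z)

/-- `fp p n x` is the probability that the first visit to `0` occurs at time `n+1`. -/
noncomputable def fp (p : ℤ → ℝ) (n : ℕ) (x : ℤ) : ℝ := ∑' z : ℤ, qk p n x z * p (-z)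

section aux

variable {p : ℤ → ℝ}

lemma p_le_one (hp0 : ∀ x, 0 ≤ p x) (hp1 : HasSum p 1) (z : ℤ) : p z ≤ 1 :=
  le_hasSum hp1 z fun j _ => hp0 j

lemma shift_summable (hp1 : HasSum p 1) (z : ℤ) : Summable fun v => p (v - z) :=
  ((Equiv.subRight z).summable_iff).2 hp1.summable

lemma shift_tsum (hp1 : HasSum p 1) (z : ℤ) : ∑' v, p (v - z) = 1 := by
  have := (Equiv.subRight z).tsum_eq p
  simpa [Equiv.subRight, hp1.tsum_eq] using this

lemma conv_summable (hp0 : ∀ x, 0 ≤ p x) (hp1 : HasSum p 1) {F : ℤ → ℝ}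
    (hF0 : ∀ z, 0 ≤ F z) (hFs : Summable F) (v : ℤ) :
    Summable fun z => F z * p (v - z) :=
  Summable.of_nonneg_of_le (fun z => mul_nonneg (hF0 z) (hp0 _))
    (fun z => mul_le_of_le_one_right (hF0 z) (p_le_one hp0 hp1 _)) hFs

lemma conv_prod_summable (hp0 : ∀ x, 0 ≤ p x) (hp1 : HasSum p 1) {F : ℤ → ℝ}
    (hF0 : ∀ z, 0 ≤ F z) (hFs : Summable F) :
    Summable (Function.uncurry fun z v => F z * p (v - z)) := by
  refine (summable_prod_of_nonneg (fun q => mul_nonneg (hF0 _) (hp0 _))).2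
    ⟨fun z => (shift_summable hp1 z).mul_left (F z), ?_⟩
  have : ∀ z : ℤ, ∑' v, F z * p (v - z) = F z := by
    intro z
    rw [tsum_mul_left, shift_tsum hp1 z, mul_one]
  simpa [this] using hFs

lemma conv_mass_summable (hp0 : ∀ x, 0 ≤ p x) (hp1 : HasSum p 1) {F : ℤ → ℝ}
    (hF0 : ∀ z, 0 ≤ F z) (hFs : Summable F) :
    Summable (fun v => ∑' z, F z * p (v - z)) := by
  have h := (conv_prod_summable hp0 hp1 hF0 hFs).prod_symm
  exact h.prod

lemma conv_mass_tsum (hp0 : ∀ x, 0 ≤ p x) (hp1 : HasSum p 1) {F : ℤ → ℝ}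
    (hF0 : ∀ z, 0 ≤ F z) (hFs : Summable F) :
    ∑' v, ∑' z, F z * p (v - z) = ∑' z, F z := by
  have h := conv_prod_summable hp0 hp1 hF0 hFs
  have hcomm := Summable.tsum_comm' h (fun z => (shift_summable hp1 z).mul_left (F z))
      (fun v => conv_summable hp0 hp1 hF0 hFs v)
  rw [hcomm]
  congr 1
  funext z
  rw [tsum_mul_left, shift_tsum hp1 z, mul_one]

lemma pn_nonneg (hp0 : ∀ x, 0 ≤ p x) : ∀ n v, 0 ≤ pn p n v
  | 0, v => by simp only [pn]; positivity
  | n + 1, v => by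
      simp only [pn]
      exact tsum_nonneg fun z => mul_nonneg (pn_nonneg hp0 n z) (hp0 _)

lemma pn_summable_mass (hp0 : ∀ x, 0 ≤ p x) (hp1 : HasSum p 1) :
    ∀ n, Summable (pn p n) ∧ ∑' v, pn p n v = 1 := by
  intro n
  induction n with
  | zero =>
      constructor
      · simpa [pn] using (hasSum_ite_eq (0 : ℤ) (1 : ℝ)).summable
      · simp [pn, tsum_ite_eq]
  | succ n ih =>
      have h1 : Summable (pn p (n + 1)) := by
        simpa [pn] using conv_mass_summable hp0 hp1 (pn_nonneg hp0 n) ih.1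
      have h2 : ∑' v, pn p (n + 1) v = 1 := by
        have := conv_mass_tsum hp0 hp1 (pn_nonneg hp0 n) ih.1
        simpa [pn, ih.2] using this
      exact ⟨h1, h2⟩

lemma pn_le_one (hp0 : ∀ x, 0 ≤ p x) (hp1 : HasSum p 1) (n : ℕ) (v : ℤ) :
    pn p n v ≤ 1 := by
  have h := pn_summable_mass hp0 hp1 n
  calc pn p n v ≤ ∑' w, pn p n w := Summable.le_tsum h.1 v fun w _ => pn_nonneg hp0 n w
  _ = 1 := h.2

lemma qk_nonneg (hp0 : ∀ x, 0 ≤ p x) : ∀ n x v, 0 ≤ qk p n x v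
  | 0, x, v => by simp only [qk]; positivity
  | n + 1, x, v => by
      simp only [qk]
      split
      · exact le_rfl
      · exact tsum_nonneg fun z => mul_nonneg (qk_nonneg hp0 n x z) (hp0 _)

lemma fp_nonneg (hp0 : ∀ x, 0 ≤ p x) (n : ℕ) (x : ℤ) : 0 ≤ fp p n x :=
  tsum_nonneg fun z => mul_nonneg (qk_nonneg hp0 n x z) (hp0 _)

lemma qk_zero_of_ne (x : ℤ) (hx : x ≠ 0) : ∀ n, qk p n x 0 = 0
  | 0 => by simp [qk, hx, Ne.symm hx]
  | n + 1 => by simp [qk]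

lemma qk_summable_mass (hp0 : ∀ x, 0 ≤ p x) (hp1 : HasSum p 1) (x : ℤ) :
    ∀ n, Summable (qk p n x) ∧
      (∑' v, qk p n x v) + ∑ k ∈ Finset.range n, fp p k x = 1 := by
  intro n
  induction n with
  | zero =>
      constructor
      · simpa [qk] using (hasSum_ite_eq (x : ℤ) (1 : ℝ)).summable
      · simp [qk, tsum_ite_eq]
  | succ n ih =>
      set g : ℤ → ℝ := fun v => ∑' z, qk p n x z * p (v - z) with hg
      have hgs : Summable g := conv_mass_summable hp0 hp1 (qk_nonneg hp0 n x) ih.1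
      have hq : qk p (n + 1) x = fun v => g v - (if v = 0 then g 0 else 0) := by
        funext v
        by_cases hv : v = 0 <;> simp [qk, hv, hg]
      have hsingle : Summable fun v : ℤ => (if v = 0 then g 0 else 0) :=
        (hasSum_ite_eq (0 : ℤ) (g 0)).summable
      have hqs : Summable (qk p (n + 1) x) := by
        rw [hq]; exact hgs.sub hsingle
      have hg0 : g 0 = fp p n x := by
        simp [hg, fp, zero_sub, neg_sub]
      constructor
      · exact hqs
      · have ht : ∑' v, qk p (n + 1) x v = (∑' v, g v) - g 0 := by
          rw [hq, Summable.tsum_sub hgs hsingle, tsum_ite_eq]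
        have hmass : ∑' v, g v = ∑' z, qk p n x z :=
          conv_mass_tsum hp0 hp1 (qk_nonneg hp0 n x) ih.1
        rw [ht, hmass, hg0, Finset.sum_range_succ]
        have := ih.2
        linarith

lemma fp_partial_le_one (hp0 : ∀ x, 0 ≤ p x) (hp1 : HasSum p 1) (x : ℤ) (K : ℕ) :
    ∑ k ∈ Finset.range K, fp p k x ≤ 1 := by
  have h := qk_summable_mass hp0 hp1 x K
  have h0 : 0 ≤ ∑' v, qk p K x v := tsum_nonneg fun v => qk_nonneg hp0 K x v
  linarith [h.2]

lemma fp_le_one (hp0 : ∀ x, 0 ≤ p x) (hp1 : HasSum p 1) (k : ℕ) (x : ℤ) :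
    fp p k x ≤ 1 := by
  have h := fp_partial_le_one hp0 hp1 x (k + 1)
  have : fp p k x ≤ ∑ j ∈ Finset.range (k + 1), fp p j x :=
    Finset.single_le_sum (f := fun j => fp p j x) (fun j _ => fp_nonneg hp0 j x)
      (Finset.self_mem_range_succ k)
  linarith

/-- First passage decomposition. -/
lemma key_identity (hp0 : ∀ x, 0 ≤ p x) (hp1 : HasSum p 1) (x : ℤ) :
    ∀ n v, pn p n (v - x) =
      qk p n x v + ∑ k ∈ Finset.range n, fp p k x * pn p (n - 1 - k) v := by
  intro n
  induction n with
  | zero =>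
      intro v
      simp [pn, qk, sub_eq_zero, eq_comm]
  | succ n ih =>
      intro v
      have hstep : pn p (n + 1) (v - x) = ∑' z, pn p n (z - x) * p (v - z) := by
        have := (Equiv.subRight x).tsum_eq (fun y => pn p n y * p (v - x - y))
        simp only [pn]
        rw [← this]
        congr 1
        funext z
        simp only [Equiv.subRight_apply]
        congr 2
        ring
      rw [hstep]
      have hrew : ∀ z : ℤ, pn p n (z - x) * p (v - z)
          = qk p n x z * p (v - z)
            + ∑ k ∈ Finset.range n, fp p k x * (pn p (n - 1 - k) z * p (v - z)) := by
        intro z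
        rw [ih z, add_mul, Finset.sum_mul]
        congr 1
        refine Finset.sum_congr rfl fun k _ => ?_
        ring
      have hqsum : Summable (qk p n x) := (qk_summable_mass hp0 hp1 x n).1
      have hS1 : Summable fun z => qk p n x z * p (v - z) :=
        conv_summable hp0 hp1 (qk_nonneg hp0 n x) hqsum v
      have hS2 : ∀ k, Summable fun z => pn p (n - 1 - k) z * p (v - z) := fun k =>
        conv_summable hp0 hp1 (pn_nonneg hp0 _) (pn_summable_mass hp0 hp1 _).1 v
      have hS3 : Summable fun z => ∑ k ∈ Finset.range n,
          fp p k x * (pn p (n - 1 - k) z * p (v - z)) :=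
        summable_sum fun k _ => (hS2 k).mul_left _
      calc ∑' z, pn p n (z - x) * p (v - z)
          = ∑' z, (qk p n x z * p (v - z)
              + ∑ k ∈ Finset.range n, fp p k x * (pn p (n - 1 - k) z * p (v - z))) := by
            exact tsum_congr hrew
        _ = (∑' z, qk p n x z * p (v - z))
              + ∑ k ∈ Finset.range n, fp p k x * ∑' z, pn p (n - 1 - k) z * p (v - z) := by
            rw [Summable.tsum_add hS1 hS3, Summable.tsum_finsetSum (fun k _ => (hS2 k).mul_left _)]
            congr 1
            exact Finset.sum_congr rfl fun k _ => (tsum_mul_left)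
        _ = (∑' z, qk p n x z * p (v - z))
              + ∑ k ∈ Finset.range n, fp p k x * pn p (n - k) v := by
            congr 1
            refine Finset.sum_congr rfl fun k hk => ?_
            have hk' : k < n := Finset.mem_range.1 hk
            have : n - k = (n - 1 - k) + 1 := by omega
            rw [this]
            all_goals simp [pn]
        _ = qk p (n + 1) x v + ∑ k ∈ Finset.range (n + 1),
              fp p k x * pn p (n + 1 - 1 - k) v := by
            rw [Finset.sum_range_succ]
            have hfirst : ∑' z, qk p n x z * p (v - z)
                = qk p (n + 1) x v + fp p n x * pn p 0 v := by
              by_cases hv : v = 0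
              · subst hv
                have h1 : qk p (n + 1) x (0 : ℤ) = 0 := by simp [qk]
                have h2 : pn p 0 (0 : ℤ) = 1 := by simp [pn]
                have h3 : ∑' z, qk p n x z * p (0 - z) = fp p n x := by
                  simp only [zero_sub]
                  rfl
                rw [h1, h2, h3]; ring
              · have h1 : qk p (n + 1) x v = ∑' z, qk p n x z * p (v - z) := by
                  simp [qk, hv]
                have h2 : pn p 0 v = 0 := by simp [pn, hv]
                rw [h1, h2]; ring
            rw [hfirst]
            have : ∀ k ∈ Finset.range n, fp p k x * pn p (n - k) v
                = fp p k x * pn p (n + 1 - 1 - k) v := by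
              intro k hk
              congr 2 <;> omega
            have hnn : n + 1 - 1 - n = 0 := by omega
            rw [Finset.sum_congr rfl this]
            all_goals rw [hnn]
            all_goals ring


lemma norm_self_of_nonneg {A : ℕ → ℝ} (hA0 : ∀ k, 0 ≤ A k) :
    (fun k => ‖A k‖) = A :=
  funext fun k => by rw [Real.norm_eq_abs, abs_of_nonneg (hA0 k)]

/-- Shifted Cauchy product. -/
lemma cauchy_shift {A B : ℕ → ℝ} (hA0 : ∀ k, 0 ≤ A k) (hB0 : ∀ k, 0 ≤ B k)
    (hAs : Summable A) (hBs : Summable B) :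
    Summable (fun n => ∑ k ∈ Finset.range n, A k * B (n - 1 - k)) ∧
      ∑' n, ∑ k ∈ Finset.range n, A k * B (n - 1 - k) = (∑' k, A k) * ∑' m, B m := by
  have hAn : Summable fun k => ‖A k‖ := by rw [norm_self_of_nonneg hA0]; exact hAs
  have hBn : Summable fun k => ‖B k‖ := by rw [norm_self_of_nonneg hB0]; exact hBs
  have hc : Summable fun m => ∑ k ∈ Finset.range (m + 1), A k * B (m - k) :=
    (summable_norm_sum_mul_range_of_summable_norm hAn hBn).of_norm
  set T : ℕ → ℝ := fun n => ∑ k ∈ Finset.range n, A k * B (n - 1 - k) with hT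
  have hshift : (fun m => T (m + 1)) = fun m => ∑ k ∈ Finset.range (m + 1), A k * B (m - k) := by
    funext m
    refine Finset.sum_congr rfl fun k hk => ?_
    congr 2 <;> omega
  have hTs : Summable T := by
    refine (summable_nat_add_iff 1).1 ?_
    rw [hshift]; exact hc
  refine ⟨hTs, ?_⟩
  rw [Summable.tsum_eq_zero_add hTs]
  have hT0 : T 0 = 0 := by simp [hT]
  rw [hT0, zero_add, tsum_congr (fun m => congrFun hshift m),
    ← tsum_mul_tsum_eq_tsum_sum_range_of_summable_norm hAn hBn]

section s_section

variable {p : ℤ → ℝ} {s : ℝ}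

lemma U_summable (hp0 : ∀ x, 0 ≤ p x) (hp1 : HasSum p 1) (hs0 : 0 ≤ s) (hs1 : s < 1)
    (v : ℤ) : Summable fun n => pn p n v * s ^ n :=
  Summable.of_nonneg_of_le (fun n => mul_nonneg (pn_nonneg hp0 n v) (pow_nonneg hs0 n))
    (fun n => mul_le_of_le_one_left (pow_nonneg hs0 n) (pn_le_one hp0 hp1 n v))
    (summable_geometric_of_lt_one hs0 hs1)

lemma FF_summable (hp0 : ∀ x, 0 ≤ p x) (hp1 : HasSum p 1) (hs0 : 0 ≤ s) (hs1 : s < 1)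
    (x : ℤ) : Summable fun k => fp p k x * s ^ (k + 1) :=
  Summable.of_nonneg_of_le
    (fun k => mul_nonneg (fp_nonneg hp0 k x) (pow_nonneg hs0 _))
    (fun k => by
      calc fp p k x * s ^ (k + 1) ≤ 1 * s ^ (k + 1) := by
            apply mul_le_mul_of_nonneg_right (fp_le_one hp0 hp1 k x) (pow_nonneg hs0 _)
        _ = s ^ k * s := by ring
        _ ≤ s ^ k * 1 := by
            apply mul_le_mul_of_nonneg_left hs1.le (pow_nonneg hs0 _)
        _ = s ^ k := by ring)
    (summable_geometric_of_lt_one hs0 hs1)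

/-- The series `Σ_n (Σ_{k<n} f_k(x) p^{n-1-k}(v)) s^n` equals `F_s(x) U_s(v)`. -/
lemma tail_cauchy (hp0 : ∀ x, 0 ≤ p x) (hp1 : HasSum p 1) (hs0 : 0 ≤ s) (hs1 : s < 1)
    (x v : ℤ) :
    Summable (fun n => (∑ k ∈ Finset.range n, fp p k x * pn p (n - 1 - k) v) * s ^ n) ∧
      ∑' n, (∑ k ∈ Finset.range n, fp p k x * pn p (n - 1 - k) v) * s ^ n
        = (∑' k, fp p k x * s ^ (k + 1)) * ∑' m, pn p m v * s ^ m := by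
  have hc := cauchy_shift (A := fun k => fp p k x * s ^ (k + 1))
      (B := fun m => pn p m v * s ^ m)
      (fun k => mul_nonneg (fp_nonneg hp0 k x) (pow_nonneg hs0 _))
      (fun m => mul_nonneg (pn_nonneg hp0 m v) (pow_nonneg hs0 m))
      (FF_summable hp0 hp1 hs0 hs1 x) (U_summable hp0 hp1 hs0 hs1 v)
  have hterm : ∀ n, (∑ k ∈ Finset.range n, fp p k x * pn p (n - 1 - k) v) * s ^ n
      = ∑ k ∈ Finset.range n, (fp p k x * s ^ (k + 1)) * (pn p (n - 1 - k) v * s ^ (n - 1 - k)) := by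
    intro n
    rw [Finset.sum_mul]
    refine Finset.sum_congr rfl fun k hk => ?_
    have hk' : k < n := Finset.mem_range.1 hk
    have : s ^ n = s ^ (k + 1) * s ^ (n - 1 - k) := by
      rw [← pow_add]
      congr 1
      omega
    rw [this]; ring
  constructor
  · exact hc.1.congr fun n => (hterm n).symm
  · rw [tsum_congr hterm]
    exact hc.2

lemma U_neg_eq (hp0 : ∀ x, 0 ≤ p x) (hp1 : HasSum p 1) (hs0 : 0 ≤ s) (hs1 : s < 1)
    {x : ℤ} (hx : x ≠ 0) :
    ∑' n, pn p n (-x) * s ^ n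
      = (∑' k, fp p k x * s ^ (k + 1)) * ∑' m, pn p m 0 * s ^ m := by
  have hdec : ∀ n : ℕ, pn p n (-x)
      = ∑ k ∈ Finset.range n, fp p k x * pn p (n - 1 - k) (0 : ℤ) := by
    intro n
    have h := key_identity hp0 hp1 x n 0
    rw [zero_sub] at h
    rw [h, qk_zero_of_ne x hx n, zero_add]
  have := (tail_cauchy hp0 hp1 hs0 hs1 x 0).2
  rw [← this]
  exact tsum_congr fun n => by rw [hdec n]

lemma U_neg_ge (hp0 : ∀ x, 0 ≤ p x) (hp1 : HasSum p 1) (hs0 : 0 ≤ s) (hs1 : s < 1)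
    (x y : ℤ) :
    (∑' k, fp p k x * s ^ (k + 1)) * (∑' m, pn p m (-y) * s ^ m)
      ≤ ∑' n, pn p n (-(x + y)) * s ^ n := by
  have hxy : (-(x + y) : ℤ) = -y - x := by ring
  have htc := tail_cauchy hp0 hp1 hs0 hs1 x (-y)
  rw [← htc.2]
  refine Summable.tsum_le_tsum (fun n => ?_) htc.1 (U_summable hp0 hp1 hs0 hs1 _)
  have h := key_identity hp0 hp1 x n (-y)
  rw [hxy, h]
  have hq : 0 ≤ qk p n x (-y) := qk_nonneg hp0 n x (-y)
  have hsn : 0 ≤ s ^ n := pow_nonneg hs0 n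
  nlinarith

lemma FF_le_one (hp0 : ∀ x, 0 ≤ p x) (hp1 : HasSum p 1) (hs0 : 0 ≤ s) (hs1 : s < 1)
    (x : ℤ) : ∑' k, fp p k x * s ^ (k + 1) ≤ 1 := by
  refine Real.tsum_le_of_sum_range_le
    (fun k => mul_nonneg (fp_nonneg hp0 k x) (pow_nonneg hs0 _)) fun K => ?_
  calc ∑ k ∈ Finset.range K, fp p k x * s ^ (k + 1)
      ≤ ∑ k ∈ Finset.range K, fp p k x := by
        refine Finset.sum_le_sum fun k _ => ?_
        exact mul_le_of_le_one_right (fp_nonneg hp0 k x) (pow_le_one₀ hs0 hs1.le)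
    _ ≤ 1 := fp_partial_le_one hp0 hp1 x K

end s_section

end aux

/-- For a recurrent, strongly aperiodic random walk on `ℤ`, the potential kernel
`a(x) = Σ_{n≥0} [p^n(0) − p^n(−x)]` is subadditive: `a(x+y) ≤ a(x) + a(y)`. -/
theorem stmt2 (p : ℤ → ℝ) (a : ℤ → ℝ)
    (hp0 : ∀ x, 0 ≤ p x) (hp1 : HasSum p 1)
    (hrec : ¬ Summable (fun n => pn p n 0))
    (hap : ∀ x : ℤ, ∀ᶠ n in atTop, 0 < pn p n x)
    (ha : ∀ x : ℤ, HasSum (fun n => pn p n 0 - pn p n (-x)) (a x)) :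
    ∀ x y : ℤ, a (x + y) ≤ a x + a y := by
  have ha0 : a 0 = 0 := by
    have h0 : HasSum (fun n : ℕ => pn p n 0 - pn p n (-(0 : ℤ))) 0 := by
      simpa using (hasSum_zero : HasSum (fun _ : ℕ => (0 : ℝ)) 0)
    exact (ha 0).unique h0
  intro x y
  by_cases hx : x = 0
  · subst hx; simp [ha0]
  by_cases hy : y = 0
  · subst hy; simp [ha0]
  -- main case
  have hAbel : ∀ z : ℤ, Tendsto (fun s : ℝ => ∑' n, (pn p n 0 - pn p n (-z)) * s ^ n)
      (𝓝[<] (1 : ℝ)) (𝓝 (a z)) := fun z =>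
    Real.tendsto_tsum_powerSeries_nhdsWithin_lt ((ha z).tendsto_sum_nat)
  have hT : Tendsto (fun s : ℝ =>
      (∑' n, (pn p n 0 - pn p n (-x)) * s ^ n)
        + (∑' n, (pn p n 0 - pn p n (-y)) * s ^ n)
        - ∑' n, (pn p n 0 - pn p n (-(x + y))) * s ^ n)
      (𝓝[<] (1 : ℝ)) (𝓝 (a x + a y - a (x + y))) :=
    ((hAbel x).add (hAbel y)).sub (hAbel (x + y))
  have hnonneg : ∀ᶠ s : ℝ in 𝓝[<] (1 : ℝ), (0 : ℝ) ≤
      (∑' n, (pn p n 0 - pn p n (-x)) * s ^ n)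
        + (∑' n, (pn p n 0 - pn p n (-y)) * s ^ n)
        - ∑' n, (pn p n 0 - pn p n (-(x + y))) * s ^ n := by
    filter_upwards [Ioo_mem_nhdsLT_of_mem
      (show (1 : ℝ) ∈ Set.Ioc (0 : ℝ) 1 by constructor <;> norm_num)] with s hs
    obtain ⟨hs0', hs1⟩ := hs
    have hs0 : (0 : ℝ) ≤ s := hs0'.le
    have hsub : ∀ z : ℤ, ∑' n, (pn p n 0 - pn p n (-z)) * s ^ n
        = (∑' n, pn p n 0 * s ^ n) - ∑' n, pn p n (-z) * s ^ n := by
      intro z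
      rw [← Summable.tsum_sub (U_summable hp0 hp1 hs0 hs1 0) (U_summable hp0 hp1 hs0 hs1 (-z))]
      exact tsum_congr fun n => by ring
    rw [hsub x, hsub y, hsub (x + y)]
    set U0 := ∑' n, pn p n 0 * s ^ n with hU0
    set Ux := ∑' n, pn p n (-x) * s ^ n with hUx
    set Uy := ∑' n, pn p n (-y) * s ^ n with hUy
    set Uxy := ∑' n, pn p n (-(x + y)) * s ^ n with hUxy
    set Fx := ∑' k, fp p k x * s ^ (k + 1) with hFx
    set Fy := ∑' k, fp p k y * s ^ (k + 1) with hFy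
    have hU0nn : 0 ≤ U0 :=
      tsum_nonneg fun n => mul_nonneg (pn_nonneg hp0 n 0) (pow_nonneg hs0 n)
    have hx1 : Ux = Fx * U0 := U_neg_eq hp0 hp1 hs0 hs1 hx
    have hy1 : Uy = Fy * U0 := U_neg_eq hp0 hp1 hs0 hs1 hy
    have hxy1 : Fx * Uy ≤ Uxy := U_neg_ge hp0 hp1 hs0 hs1 x y
    have hFx1 : Fx ≤ 1 := FF_le_one hp0 hp1 hs0 hs1 x
    have hFy1 : Fy ≤ 1 := FF_le_one hp0 hp1 hs0 hs1 y
    have hUyU0 : Uy ≤ U0 := by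
      rw [hy1]
      exact mul_le_of_le_one_left hU0nn hFy1
    nlinarith [mul_nonneg (sub_nonneg.2 hFx1) (sub_nonneg.2 hUyU0)]
  have := ge_of_tendsto hT hnonneg
  linarith
end

section
/- Let X be an integer-valued random variable with P[X > x] ~ q⁺Bx^{−α} and P[X < −x] ~ q⁻Bx^{−α} as x → ∞, where 1 < α < 2, B > 0, q⁺+q⁻ = 1. Then the characteristic function φ(θ) = E[e^{iθX}] satisfies |φ′(θ) − φ′(θ′)| ≤ C|θ−θ′|^{α−1} for some constant C and all θ, θ′. -/
/-!
Put `T n = P(|X| > n)` and `h = |θ - θ'|`. The tail hypotheses give `T n ≤ K (n + 1)^{-α}`, and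
`φ'(θ) - φ'(θ') = Σ_x p(x) i x (e^{iθx} - e^{iθ'x})` is bounded by `2 Σ_x p(x) |x| min(1, h|x|)`.
Summation by parts, through `m min(1, hm) ≤ 2 Σ_{n<m} min(1, h(n+1))`, bounds that sum by
`2 Σ_n min(1, h(n+1)) T n ≤ 2K Σ_{m≥1} min(1, hm) m^{-α}`. Cutting this sum at `m ≈ 1/h`
gives `h Σ_{m≤1/h} m^{1-α} + Σ_{m>1/h} m^{-α} = O(h · h^{α-2}) + O(h^{α-1})`.
-/

open Filter Topology Finset Asymptotics

/-- The characteristic function `φ(θ) = E[e^{iθX}] = Σ_x p(x) e^{iθx}`. -/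
noncomputable def rwChar (p : ℤ → ℝ) (θ : ℝ) : ℂ :=
  ∑' x : ℤ, (p x : ℂ) * Complex.exp (Complex.I * θ * x)

section PowerSums

lemma rpow_sub_one_le_rpow_sub_rpow_div {γ x : ℝ} (hγ1 : γ < 1) (hγ0 : γ ≠ 0)
    (hx : 1 < x ∨ (x = 1 ∧ 0 < γ)) : x ^ (γ - 1) ≤ (x ^ γ - (x - 1) ^ γ) / γ := by
  have hx1 : 1 ≤ x := by rcases hx with hx | ⟨rfl, _⟩ <;> linarith
  have hcont : ContinuousOn (fun t => t ^ γ / γ) (Set.Icc (x - 1) x) := by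
    refine fun t ht => ((Real.continuousAt_rpow_const t γ ?_).div_const γ).continuousWithinAt
    rcases hx with hx | ⟨_, hγ⟩
    · exact Or.inl (by linarith [ht.1])
    · exact Or.inr hγ.le
  have hderiv : ∀ t ∈ Set.Ioo (x - 1) x, HasDerivAt (fun t => t ^ γ / γ) (t ^ (γ - 1)) t := by
    intro t ht
    simpa [mul_div_cancel_left₀ _ hγ0] using
      (Real.hasDerivAt_rpow_const (x := t) (p := γ) (Or.inl (by linarith [ht.1]))).div_const γ
  obtain ⟨c, ⟨hc0, hcx⟩, hc⟩ := exists_hasDerivAt_eq_slope _ _ (sub_one_lt x) hcont hderiv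
  calc x ^ (γ - 1) ≤ c ^ (γ - 1) :=
        Real.rpow_le_rpow_of_nonpos (by linarith) hcx.le (by linarith)
    _ = (x ^ γ - (x - 1) ^ γ) / γ := by rw [hc, sub_sub_cancel, div_one, sub_div]

lemma sum_range_rpow_sub_one_le {γ : ℝ} (hγ0 : 0 < γ) (hγ1 : γ < 1) (N : ℕ) :
    ∑ i ∈ range N, ((i : ℝ) + 1) ^ (γ - 1) ≤ (N : ℝ) ^ γ / γ := by
  calc ∑ i ∈ range N, ((i : ℝ) + 1) ^ (γ - 1)
      ≤ ∑ i ∈ range N, (((i + 1 : ℕ) : ℝ) ^ γ / γ - (i : ℝ) ^ γ / γ) := by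
        gcongr with i
        rw [← sub_div]
        push_cast
        simpa using rpow_sub_one_le_rpow_sub_rpow_div hγ1 hγ0.ne'
          (x := (i : ℝ) + 1) (by rcases i.eq_zero_or_pos with rfl | hi <;> simp [*])
    _ = (N : ℝ) ^ γ / γ := by
        rw [sum_range_sub (fun i : ℕ => (i : ℝ) ^ γ / γ)]
        simp [Real.zero_rpow hγ0.ne']

lemma sum_range_add_rpow_neg_le {α : ℝ} (hα : 1 < α) {N : ℕ} (hN : 1 ≤ N) (M : ℕ) :
    ∑ i ∈ range M, (((N + i : ℕ) : ℝ) + 1) ^ (-α) ≤ (N : ℝ) ^ (1 - α) / (α - 1) := by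
  calc ∑ i ∈ range M, (((N + i : ℕ) : ℝ) + 1) ^ (-α)
      ≤ ∑ i ∈ range M, (((N + i : ℕ) : ℝ) ^ (1 - α) / (α - 1)
          - ((N + (i + 1) : ℕ) : ℝ) ^ (1 - α) / (α - 1)) := by
        gcongr with i
        have hNi : (1 : ℝ) ≤ N + i := by norm_cast; omega
        have := rpow_sub_one_le_rpow_sub_rpow_div (γ := 1 - α) (x := (N + i : ℝ) + 1)
          (by linarith) (by linarith) (Or.inl (by linarith))
        rw [show 1 - α - 1 = -α by ring, add_sub_cancel_right] at this
        push_cast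
        rw [← sub_div, ← add_assoc]
        refine this.trans_eq ?_
        rw [div_eq_div_iff (by linarith) (by linarith)]
        ring
    _ ≤ (N : ℝ) ^ (1 - α) / (α - 1) := by
        rw [sum_range_sub' (fun i : ℕ => ((N + i : ℕ) : ℝ) ^ (1 - α) / (α - 1)), add_zero]
        have : 0 ≤ ((N + M : ℕ) : ℝ) ^ (1 - α) / (α - 1) := by
          have := sub_pos.2 hα
          positivity
        linarith

lemma sum_range_min_mul_rpow_neg_le_of_le_one {α h : ℝ} (hα : 1 < α) (hα2 : α < 2)
    (h0 : 0 < h) (h1 : h ≤ 1) (M : ℕ) :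
    ∑ n ∈ range M, min 1 (h * ((n : ℝ) + 1)) * ((n : ℝ) + 1) ^ (-α)
      ≤ (2 / (2 - α) + 1 / (α - 1)) * h ^ (α - 1) := by
  set f : ℕ → ℝ := fun n => min 1 (h * ((n : ℝ) + 1)) * ((n : ℝ) + 1) ^ (-α)
  have hf0 : ∀ n, 0 ≤ f n := fun n => by positivity
  set N := ⌈h⁻¹⌉₊
  have hN1 : 1 ≤ N := Nat.one_le_ceil_iff.2 (by positivity)
  have hNge : h⁻¹ ≤ N := Nat.le_ceil _
  have hNle : (N : ℝ) ≤ 2 * h⁻¹ := by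
    have := Nat.ceil_lt_add_one (inv_nonneg.2 h0.le)
    have := one_le_inv_iff₀.2 ⟨h0, h1⟩
    linarith
  have head : ∑ n ∈ range N, f n ≤ h * ((N : ℝ) ^ (2 - α) / (2 - α)) := by
    calc ∑ n ∈ range N, f n ≤ ∑ n ∈ range N, h * ((n : ℝ) + 1) ^ ((2 - α) - 1) := by
          refine sum_le_sum fun n _ => ?_
          rw [show 2 - α - 1 = 1 + -α by ring, Real.rpow_add (by positivity), Real.rpow_one,
            ← mul_assoc]
          exact mul_le_mul_of_nonneg_right (min_le_right _ _) (by positivity)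
      _ ≤ h * ((N : ℝ) ^ (2 - α) / (2 - α)) := by
          rw [← mul_sum]
          gcongr
          exact sum_range_rpow_sub_one_le (by linarith) (by linarith) N
  have tail : ∑ i ∈ range M, f (N + i) ≤ (N : ℝ) ^ (1 - α) / (α - 1) := by
    refine le_trans (sum_le_sum fun i _ => ?_) (sum_range_add_rpow_neg_le hα hN1 M)
    exact mul_le_of_le_one_left (by positivity) (min_le_left _ _)
  have hN2 : h * (N : ℝ) ^ (2 - α) ≤ 2 * h ^ (α - 1) := by
    calc h * (N : ℝ) ^ (2 - α) ≤ h * (2 * h⁻¹) ^ (2 - α) := by gcongr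
      _ = 2 ^ (2 - α) * h ^ (α - 1) := by
          rw [Real.mul_rpow (by norm_num) (by positivity), Real.inv_rpow h0.le,
            ← Real.rpow_neg h0.le, mul_left_comm, ← Real.rpow_one_add' h0.le (by linarith)]
          ring_nf
      _ ≤ 2 * h ^ (α - 1) := by
          gcongr
          simpa using Real.rpow_le_rpow_of_exponent_le one_le_two (by linarith : 2 - α ≤ 1)
  have hN3 : (N : ℝ) ^ (1 - α) ≤ h ^ (α - 1) := by
    calc (N : ℝ) ^ (1 - α) ≤ (h⁻¹) ^ (1 - α) :=
          Real.rpow_le_rpow_of_nonpos (by positivity) hNge (by linarith)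
      _ = h ^ (α - 1) := by rw [Real.inv_rpow h0.le, ← Real.rpow_neg h0.le, neg_sub]
  calc ∑ n ∈ range M, f n ≤ ∑ n ∈ range (N + M), f n :=
        sum_le_sum_of_subset_of_nonneg (range_mono (by omega)) fun n _ _ => hf0 n
    _ = ∑ n ∈ range N, f n + ∑ i ∈ range M, f (N + i) := sum_range_add f N M
    _ ≤ h * ((N : ℝ) ^ (2 - α) / (2 - α)) + (N : ℝ) ^ (1 - α) / (α - 1) := add_le_add head tail
    _ ≤ (2 * h ^ (α - 1)) / (2 - α) + h ^ (α - 1) / (α - 1) := by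
        rw [← mul_div_assoc]
        gcongr
    _ = (2 / (2 - α) + 1 / (α - 1)) * h ^ (α - 1) := by ring

lemma sum_range_min_mul_rpow_neg_le {α h : ℝ} (hα : 1 < α) (hα2 : α < 2) (h0 : 0 ≤ h)
    (M : ℕ) :
    ∑ n ∈ range M, min 1 (h * ((n : ℝ) + 1)) * ((n : ℝ) + 1) ^ (-α)
      ≤ (2 / (2 - α) + 1 / (α - 1)) * h ^ (α - 1) := by
  rcases h0.eq_or_lt with rfl | h0
  · simp [Real.zero_rpow (by linarith : α - 1 ≠ 0)]
  have hmin : ∀ n : ℕ, min 1 (h * ((n : ℝ) + 1)) = min 1 (min h 1 * ((n : ℝ) + 1)) := by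
    intro n
    rcases le_total h 1 with hh | hh
    · rw [min_eq_left hh]
    · rw [min_eq_right hh, one_mul, min_eq_left (one_le_mul_of_one_le_of_one_le hh (by simp)),
        min_eq_left (by simp)]
  calc ∑ n ∈ range M, min 1 (h * ((n : ℝ) + 1)) * ((n : ℝ) + 1) ^ (-α)
      = ∑ n ∈ range M, min 1 (min h 1 * ((n : ℝ) + 1)) * ((n : ℝ) + 1) ^ (-α) := by
        simp only [hmin]
    _ ≤ (2 / (2 - α) + 1 / (α - 1)) * min h 1 ^ (α - 1) :=
        sum_range_min_mul_rpow_neg_le_of_le_one hα hα2 (lt_min h0 one_pos) (min_le_right _ _) M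
    _ ≤ (2 / (2 - α) + 1 / (α - 1)) * h ^ (α - 1) := by
        have : 0 < 2 - α := by linarith
        have : 0 < α - 1 := by linarith
        gcongr
        exact min_le_left _ _

lemma natCast_mul_min_le_two_mul_sum {h : ℝ} (h0 : 0 ≤ h) (m : ℕ) :
    (m : ℝ) * min 1 (h * m) ≤ 2 * ∑ n ∈ range m, min 1 (h * ((n : ℝ) + 1)) := by
  induction m with
  | zero => simp
  | succ m ih =>
    rw [sum_range_succ, mul_add]
    suffices (m + 1 : ℝ) * min 1 (h * (m + 1)) - m * min 1 (h * m) ≤ 2 * min 1 (h * (m + 1)) by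
      push_cast
      linarith
    have hm : (0 : ℝ) ≤ m := m.cast_nonneg
    rcases le_total (h * (m + 1)) 1 with h1 | h1
    · rw [min_eq_right h1, min_eq_right (by nlinarith)]
      nlinarith
    rcases le_total (h * m) 1 with h2 | h2
    · rw [min_eq_left h1, min_eq_right h2]
      nlinarith
    · rw [min_eq_left h1, min_eq_left h2]
      linarith

end PowerSums

lemma Summable.ite_zero {ι : Type*} {f : ι → ℝ} (hf : Summable f) (P : ι → Prop)
    [DecidablePred P] : Summable fun i => if P i then f i else 0 :=
  (hf.indicator {i | P i}).congr fun i => by simp [Set.indicator_apply]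

section Tails

variable {p : ℤ → ℝ}

noncomputable def absTail (p : ℤ → ℝ) (n : ℕ) : ℝ :=
  ∑' x : ℤ, if n < x.natAbs then p x else 0

lemma absTail_nonneg (hp0 : ∀ x, 0 ≤ p x) (n : ℕ) : 0 ≤ absTail p n :=
  tsum_nonneg fun x => by split_ifs <;> simp [hp0 x]

lemma absTail_eq_add (hp : Summable p) (n : ℕ) :
    absTail p n = (∑' x : ℤ, if (n : ℝ) < x then p x else 0)
      + ∑' x : ℤ, if (x : ℝ) < -n then p x else 0 := by
  rw [← (hp.ite_zero _).tsum_add (hp.ite_zero _)]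
  refine tsum_congr fun x => ?_
  have h1 : (n : ℝ) < x ↔ (n : ℤ) < x := by exact_mod_cast Iff.rfl
  have h2 : (x : ℝ) < -n ↔ x < -(n : ℤ) := by exact_mod_cast Iff.rfl
  simp only [h1, h2]
  split_ifs <;> first | (exfalso; omega) | simp

lemma isBigO_rpow_neg_of_tendsto_mul_rpow {f : ℝ → ℝ} {α c : ℝ}
    (hf : Tendsto (fun x => f x * x ^ α) atTop (𝓝 c)) : f =O[atTop] fun x => x ^ (-α) := by
  refine ((hf.isBigO_one ℝ).mul (isBigO_refl (fun x : ℝ => x ^ (-α)) atTop)).congr' ?_ ?_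
  · filter_upwards [eventually_gt_atTop 0] with x hx
    rw [mul_assoc, ← Real.rpow_add hx, add_neg_cancel, Real.rpow_zero, mul_one]
  · simp

lemma isBigO_natCast_rpow_neg_add_one {α : ℝ} (hα : 0 ≤ α) :
    (fun n : ℕ => (n : ℝ) ^ (-α)) =O[atTop] fun n => ((n : ℝ) + 1) ^ (-α) := by
  refine IsBigO.of_bound (2 ^ α) ?_
  filter_upwards [eventually_ge_atTop 1] with n hn
  have hn : (1 : ℝ) ≤ n := by exact_mod_cast hn
  rw [Real.norm_of_nonneg (by positivity), Real.norm_of_nonneg (by positivity)]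
  calc (n : ℝ) ^ (-α) = 2 ^ α * (2 * n) ^ (-α) := by
        rw [Real.mul_rpow (by norm_num) (by positivity), ← mul_assoc, ← Real.rpow_add two_pos,
          add_neg_cancel, Real.rpow_zero, one_mul]
    _ ≤ 2 ^ α * ((n : ℝ) + 1) ^ (-α) := mul_le_mul_of_nonneg_left
          (Real.rpow_le_rpow_of_nonpos (by positivity) (by linarith) (by linarith)) (by positivity)

lemma exists_absTail_le_mul_rpow_neg {α cp cm : ℝ} (hα : 0 ≤ α) (hp : Summable p)
    (htailp : Tendsto (fun x : ℝ => (∑' y : ℤ, if x < (y : ℝ) then p y else 0) * x ^ α)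
      atTop (𝓝 cp))
    (htailm : Tendsto (fun x : ℝ => (∑' y : ℤ, if (y : ℝ) < -x then p y else 0) * x ^ α)
      atTop (𝓝 cm)) :
    ∃ K, ∀ n, absTail p n ≤ K * ((n : ℝ) + 1) ^ (-α) := by
  have hO : absTail p =O[atTop] fun n => ((n : ℝ) + 1) ^ (-α) :=
    (((isBigO_rpow_neg_of_tendsto_mul_rpow htailp).add
      (isBigO_rpow_neg_of_tendsto_mul_rpow htailm)).comp_tendsto tendsto_natCast_atTop_atTop
      |>.trans (isBigO_natCast_rpow_neg_add_one hα)).congr_left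
      fun n => (absTail_eq_add hp n).symm
  rw [← Nat.cofinite_eq_atTop, isBigO_cofinite_iff fun n hn => absurd hn (by positivity)] at hO
  obtain ⟨K, hK⟩ := hO
  refine ⟨K, fun n => (le_abs_self _).trans ((hK n).trans_eq ?_)⟩
  rw [Real.norm_of_nonneg (by positivity)]

lemma sum_mul_sum_range_natAbs_le (hp0 : ∀ x, 0 ≤ p x) (hp : Summable p) {a : ℕ → ℝ}
    (ha : ∀ n, 0 ≤ a n) (s : Finset ℤ) {M : ℕ} (hM : ∀ x ∈ s, x.natAbs ≤ M) :
    ∑ x ∈ s, p x * ∑ n ∈ range x.natAbs, a n ≤ ∑ n ∈ range M, a n * absTail p n := by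
  have hsplit : ∀ x ∈ s, p x * ∑ n ∈ range x.natAbs, a n
      = ∑ n ∈ range M, a n * if n < x.natAbs then p x else 0 := by
    intro x hx
    simp_rw [mul_ite, mul_zero]
    rw [← sum_filter, mul_sum]
    refine sum_congr ?_ fun n _ => mul_comm _ _
    ext n
    simp only [mem_range, mem_filter]
    have := hM x hx
    omega
  calc ∑ x ∈ s, p x * ∑ n ∈ range x.natAbs, a n
      = ∑ n ∈ range M, a n * ∑ x ∈ s, if n < x.natAbs then p x else 0 := by
        rw [sum_congr rfl hsplit, sum_comm]
        simp_rw [mul_sum]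
    _ ≤ ∑ n ∈ range M, a n * absTail p n := by
        gcongr with n
        · exact ha n
        · exact (hp.ite_zero _).sum_le_tsum s
            fun x _ => by split_ifs <;> simp [hp0 x]

end Tails

section Moments

variable {p : ℤ → ℝ} {α K : ℝ}

lemma sum_mul_natAbs_mul_min_le (hα : 1 < α) (hα2 : α < 2) (hp0 : ∀ x, 0 ≤ p x)
    (hp : Summable p) (hK : ∀ n, absTail p n ≤ K * ((n : ℝ) + 1) ^ (-α)) {h : ℝ} (h0 : 0 ≤ h)
    (s : Finset ℤ) :
    ∑ x ∈ s, p x * (x.natAbs * min 1 (h * x.natAbs))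
      ≤ 2 * K * (2 / (2 - α) + 1 / (α - 1)) * h ^ (α - 1) := by
  have hK0 : 0 ≤ K := by simpa using (absTail_nonneg hp0 0).trans (hK 0)
  set a : ℕ → ℝ := fun n => min 1 (h * ((n : ℝ) + 1))
  have ha : ∀ n, 0 ≤ a n := fun n => le_min zero_le_one (by positivity)
  set M := s.sup Int.natAbs
  calc ∑ x ∈ s, p x * (x.natAbs * min 1 (h * x.natAbs))
      ≤ ∑ x ∈ s, p x * (2 * ∑ n ∈ range x.natAbs, a n) := sum_le_sum fun x _ =>
        mul_le_mul_of_nonneg_left (natCast_mul_min_le_two_mul_sum h0 _) (hp0 x)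
    _ = 2 * ∑ x ∈ s, p x * ∑ n ∈ range x.natAbs, a n := by
        rw [mul_sum]
        simp_rw [mul_left_comm]
    _ ≤ 2 * ∑ n ∈ range M, a n * absTail p n := by
        gcongr
        exact sum_mul_sum_range_natAbs_le hp0 hp ha s fun x hx => le_sup hx
    _ ≤ 2 * ∑ n ∈ range M, a n * (K * ((n : ℝ) + 1) ^ (-α)) := by
        gcongr with n
        exact hK n
    _ = 2 * K * ∑ n ∈ range M, min 1 (h * ((n : ℝ) + 1)) * ((n : ℝ) + 1) ^ (-α) := by
        simp only [mul_assoc, mul_sum]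
        exact sum_congr rfl fun n _ => by ring
    _ ≤ 2 * K * (2 / (2 - α) + 1 / (α - 1)) * h ^ (α - 1) := by
        rw [mul_assoc (2 * K)]
        gcongr
        exact sum_range_min_mul_rpow_neg_le hα hα2 h0 M

lemma summable_mul_natAbs (hα : 1 < α) (hα2 : α < 2) (hp0 : ∀ x, 0 ≤ p x) (hp : Summable p)
    (hK : ∀ n, absTail p n ≤ K * ((n : ℝ) + 1) ^ (-α)) :
    Summable fun x => p x * x.natAbs := by
  refine summable_of_sum_le (fun x => by have := hp0 x; positivity) fun s =>
    (sum_le_sum fun x _ => ?_).trans (sum_mul_natAbs_mul_min_le hα hα2 hp0 hp hK zero_le_one s)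
  gcongr
  · exact hp0 x
  rcases x.natAbs.eq_zero_or_pos with hx | hx
  · simp [hx]
  · rw [one_mul, min_eq_left (by exact_mod_cast hx), mul_one]

lemma tsum_mul_natAbs_mul_min_le (hα : 1 < α) (hα2 : α < 2) (hp0 : ∀ x, 0 ≤ p x)
    (hp : Summable p) (hK : ∀ n, absTail p n ≤ K * ((n : ℝ) + 1) ^ (-α)) {h : ℝ} (h0 : 0 ≤ h) :
    ∑' x, p x * (x.natAbs * min 1 (h * x.natAbs))
      ≤ 2 * K * (2 / (2 - α) + 1 / (α - 1)) * h ^ (α - 1) :=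
  (summable_of_sum_le (fun x => by have := hp0 x; positivity)
    (sum_mul_natAbs_mul_min_le hα hα2 hp0 hp hK h0)).tsum_le_of_sum_le
    (sum_mul_natAbs_mul_min_le hα hα2 hp0 hp hK h0)

end Moments

section CharacteristicFunction

variable {p : ℤ → ℝ}

lemma norm_exp_I_mul_mul_intCast (t : ℝ) (x : ℤ) :
    ‖Complex.exp (Complex.I * t * x)‖ = 1 := by
  rw [show Complex.I * t * x = Complex.I * ((t * x : ℝ) : ℂ) by push_cast; ring]
  exact Complex.norm_exp_I_mul_ofReal _

lemma norm_exp_I_mul_sub_exp_I_mul_le (θ θ' : ℝ) (x : ℤ) :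
    ‖Complex.exp (Complex.I * θ * x) - Complex.exp (Complex.I * θ' * x)‖
      ≤ 2 * min 1 (|θ - θ'| * x.natAbs) := by
  set a : ℝ := (θ - θ') * x
  have hfac : Complex.exp (Complex.I * θ * x) - Complex.exp (Complex.I * θ' * x)
      = Complex.exp (Complex.I * θ' * x) * (Complex.exp (Complex.I * a) - 1) := by
    rw [mul_sub, mul_one, ← Complex.exp_add]
    congr 2
    push_cast [a]
    ring
  have ha : ‖a‖ = |θ - θ'| * x.natAbs := by
    rw [Real.norm_eq_abs, abs_mul, Nat.cast_natAbs, Int.cast_abs]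
  have hle_two : ‖Complex.exp (Complex.I * a) - 1‖ ≤ 2 :=
    (norm_sub_le _ _).trans (by rw [Complex.norm_exp_I_mul_ofReal]; norm_num)
  have hle_abs : ‖Complex.exp (Complex.I * a) - 1‖ ≤ |θ - θ'| * x.natAbs :=
    ha ▸ Real.norm_exp_I_mul_ofReal_sub_one_le
  rw [hfac, norm_mul, norm_exp_I_mul_mul_intCast, one_mul, mul_min_of_nonneg _ _ zero_le_two,
    mul_one]
  exact le_min hle_two (hle_abs.trans (le_mul_of_one_le_left (by positivity) one_le_two))

lemma norm_ofReal_mul_I_mul_intCast (hp0 : ∀ x, 0 ≤ p x) (x : ℤ) :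
    ‖(p x : ℂ) * (Complex.I * x)‖ = p x * x.natAbs := by
  rw [norm_mul, norm_mul, Complex.norm_real, Real.norm_of_nonneg (hp0 x), Complex.norm_I,
    Complex.norm_intCast, Nat.cast_natAbs, Int.cast_abs, one_mul]

lemma norm_ofReal_mul_exp_mul_I_mul (hp0 : ∀ x, 0 ≤ p x) (t : ℝ) (x : ℤ) :
    ‖(p x : ℂ) * (Complex.exp (Complex.I * t * x) * (Complex.I * x))‖ = p x * x.natAbs := by
  rw [mul_left_comm, norm_mul, norm_exp_I_mul_mul_intCast, one_mul,
    norm_ofReal_mul_I_mul_intCast hp0]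

lemma hasDerivAt_rwChar (hp0 : ∀ x, 0 ≤ p x) (hp : Summable p)
    (hp1 : Summable fun x => p x * x.natAbs) (θ : ℝ) :
    HasDerivAt (rwChar p)
      (∑' x : ℤ, (p x : ℂ) * (Complex.exp (Complex.I * θ * x) * (Complex.I * x))) θ := by
  have hterm : ∀ (x : ℤ) (t : ℝ), HasDerivAt (fun t : ℝ => (p x : ℂ) * Complex.exp (Complex.I * t * x))
      ((p x : ℂ) * (Complex.exp (Complex.I * t * x) * (Complex.I * x))) t := by
    intro x t
    have : HasDerivAt (fun t : ℝ => Complex.I * t * x) (Complex.I * x) t := by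
      simpa using ((hasDerivAt_id t).ofReal_comp.const_mul Complex.I).mul_const (x : ℂ)
    exact this.cexp.const_mul _
  exact hasDerivAt_tsum (y₀ := 0) hp1 hterm
    (fun x t => (norm_ofReal_mul_exp_mul_I_mul hp0 t x).le) (by simpa using hp) θ

lemma norm_deriv_rwChar_sub_le (hp0 : ∀ x, 0 ≤ p x) (hp : Summable p)
    (hp1 : Summable fun x => p x * x.natAbs) (θ θ' : ℝ) :
    ‖deriv (rwChar p) θ - deriv (rwChar p) θ'‖
      ≤ 2 * ∑' x, p x * (x.natAbs * min 1 (|θ - θ'| * x.natAbs)) := by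
  have hsum : ∀ t : ℝ, Summable fun x : ℤ =>
      (p x : ℂ) * (Complex.exp (Complex.I * t * x) * (Complex.I * x)) := fun t =>
    .of_norm (hp1.congr fun x => (norm_ofReal_mul_exp_mul_I_mul hp0 t x).symm)
  have hbound : Summable fun x => 2 * (p x * (x.natAbs * min 1 (|θ - θ'| * x.natAbs))) :=
    (hp1.mul_left 2).of_nonneg_of_le (fun x => by have := hp0 x; positivity) fun x => by
      have := hp0 x
      gcongr
      exact mul_le_of_le_one_right (by positivity) (min_le_left _ _)
  rw [(hasDerivAt_rwChar hp0 hp hp1 θ).deriv, (hasDerivAt_rwChar hp0 hp hp1 θ').deriv,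
    ← (hsum θ).tsum_sub (hsum θ'), ← tsum_mul_left]
  refine tsum_of_norm_bounded hbound.hasSum fun x => ?_
  calc ‖(p x : ℂ) * (Complex.exp (Complex.I * θ * x) * (Complex.I * x))
        - (p x : ℂ) * (Complex.exp (Complex.I * θ' * x) * (Complex.I * x))‖
      = ‖(p x : ℂ) * (Complex.I * x)‖
        * ‖Complex.exp (Complex.I * θ * x) - Complex.exp (Complex.I * θ' * x)‖ := by
        rw [← norm_mul]
        congr 1
        ring
    _ ≤ p x * x.natAbs * (2 * min 1 (|θ - θ'| * x.natAbs)) := by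
        rw [norm_ofReal_mul_I_mul_intCast hp0]
        have := hp0 x
        gcongr
        exact norm_exp_I_mul_sub_exp_I_mul_le θ θ' x
    _ = 2 * (p x * (x.natAbs * min 1 (|θ - θ'| * x.natAbs))) := by ring

end CharacteristicFunction

theorem stmt11_general (p : ℤ → ℝ) (α B qp qm : ℝ)
    (hα : 1 < α) (hα2 : α < 2)
    (hp0 : ∀ x, 0 ≤ p x) (hp1 : HasSum p 1)
    (htailp : Tendsto (fun x : ℝ => (∑' y : ℤ, if x < (y : ℝ) then p y else 0) * x ^ α)
      atTop (𝓝 (qp * B)))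
    (htailm : Tendsto (fun x : ℝ => (∑' y : ℤ, if (y : ℝ) < -x then p y else 0) * x ^ α)
      atTop (𝓝 (qm * B))) :
    ∃ C : ℝ, ∀ θ θ' : ℝ,
      ‖deriv (rwChar p) θ - deriv (rwChar p) θ'‖ ≤ C * |θ - θ'| ^ (α - 1) := by
  have hp := hp1.summable
  obtain ⟨K, hK⟩ := exists_absTail_le_mul_rpow_neg (by linarith) hp htailp htailm
  have hmoment := summable_mul_natAbs hα hα2 hp0 hp hK
  refine ⟨2 * (2 * K * (2 / (2 - α) + 1 / (α - 1))), fun θ θ' => ?_⟩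
  calc ‖deriv (rwChar p) θ - deriv (rwChar p) θ'‖
      ≤ 2 * ∑' x, p x * (x.natAbs * min 1 (|θ - θ'| * x.natAbs)) :=
        norm_deriv_rwChar_sub_le hp0 hp hmoment θ θ'
    _ ≤ 2 * (2 * K * (2 / (2 - α) + 1 / (α - 1)) * |θ - θ'| ^ (α - 1)) := by
        gcongr
        exact tsum_mul_natAbs_mul_min_le hα hα2 hp0 hp hK (abs_nonneg _)
    _ = _ := by ring

/-- If `X` is ℤ-valued with `P[X > x] ~ q⁺ B x^{−α}`, `P[X < −x] ~ q⁻ B x^{−α}`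
(`1 < α < 2`, `B > 0`, `q⁺ + q⁻ = 1`), then `φ′` is Hölder of order `α − 1`:
`|φ′(θ) − φ′(θ′)| ≤ C |θ − θ′|^{α−1}`. -/
theorem stmt11 (p : ℤ → ℝ) (α B qp qm : ℝ)
    (hα : 1 < α) (hα2 : α < 2) (hB : 0 < B)
    (hqp : 0 ≤ qp) (hqm : 0 ≤ qm) (hq : qp + qm = 1)
    (hp0 : ∀ x, 0 ≤ p x) (hp1 : HasSum p 1)
    (htailp : Tendsto (fun x : ℝ => (∑' y : ℤ, if x < (y : ℝ) then p y else 0) * x ^ α)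
      atTop (𝓝 (qp * B)))
    (htailm : Tendsto (fun x : ℝ => (∑' y : ℤ, if (y : ℝ) < -x then p y else 0) * x ^ α)
      atTop (𝓝 (qm * B))) :
    ∃ C : ℝ, ∀ θ θ' : ℝ,
      ‖deriv (rwChar p) θ - deriv (rwChar p) θ'‖ ≤ C * |θ - θ'| ^ (α - 1) :=
  stmt11_general p α B qp qm hα hα2 hp0 hp1 htailp htailm
end
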